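/- arXiv:1803.02604 — 4 statements merged into one kernel-verified Lean document; each statement's English description precedes it below -/
import Mathlib

section
/- Let n be a positive integer and let α, β be order preserving partial contractions in OCP_n. Then α L* β if and only if im α = im β. -/
/-- A partial transformation of the chain `[n] = {1,…,n}`, encoded as a map
`ℕ → Option ℕ`: `α x = some y` means `x ∈ dom α` and `xα = y`. -/
def IsPT (n : ℕ) (α : ℕ → Option ℕ) : Prop :=
  ∀ x y, α x = some y → x ∈ Set.Icc 1 n ∧ y ∈ Set.Icc 1 n

/-- Composition of partial transformations: apply `α` first, then `β`. -/
def pcomp (α β : ℕ → Option ℕ) : ℕ → Option ℕ := fun x => (α x).bind β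

/-- `α` is a contraction: `|xα − yα| ≤ |x − y|` on its domain. -/
def IsContraction (α : ℕ → Option ℕ) : Prop :=
  ∀ x y a b, α x = some a → α y = some b → Nat.dist a b ≤ Nat.dist x y

def IsOrderPreserving (α : ℕ → Option ℕ) : Prop :=
  ∀ x y a b, α x = some a → α y = some b → x ≤ y → a ≤ b

def IsOrderReversing (α : ℕ → Option ℕ) : Prop :=
  ∀ x y a b, α x = some a → α y = some b → x ≤ y → b ≤ a

/-- `CP n`: the partial contractions of `[n]`. -/
def CP (n : ℕ) (α : ℕ → Option ℕ) : Prop := IsPT n α ∧ IsContraction α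

/-- `OCP n`: the order preserving partial contractions of `[n]`. -/
def OCP (n : ℕ) (α : ℕ → Option ℕ) : Prop := CP n α ∧ IsOrderPreserving α

/-- `ORCP n`: the order preserving or order reversing partial contractions of `[n]`. -/
def ORCP (n : ℕ) (α : ℕ → Option ℕ) : Prop :=
  CP n α ∧ (IsOrderPreserving α ∨ IsOrderReversing α)

/-- The image of a partial transformation. -/
def img (α : ℕ → Option ℕ) : Set ℕ := {y | ∃ x, α x = some y}

/-- The kernel of a partial transformation:
`{(x,y) ∈ dom α × dom α : xα = yα}`. -/
def pker (α : ℕ → Option ℕ) : Set (ℕ × ℕ) :=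
  {p | α p.1 ≠ none ∧ α p.1 = α p.2}

/-- The starred Green's relation `L*` relative to the class `S`:
`α L* β` iff for all `γ, δ ∈ S`, `αγ = αδ ⟺ βγ = βδ`. -/
def LStar (S : (ℕ → Option ℕ) → Prop) (α β : ℕ → Option ℕ) : Prop :=
  ∀ γ δ, S γ → S δ → (pcomp α γ = pcomp α δ ↔ pcomp β γ = pcomp β δ)

/-- The starred Green's relation `R*` relative to the class `S`:
`α R* β` iff for all `γ, δ ∈ S`, `γα = δα ⟺ γβ = δβ`. -/
def RStar (S : (ℕ → Option ℕ) → Prop) (α β : ℕ → Option ℕ) : Prop :=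
  ∀ γ δ, S γ → S δ → (pcomp γ α = pcomp δ α ↔ pcomp γ β = pcomp δ β)

lemma ocp_empty (n : ℕ) : OCP n (fun _ => none) := by
  refine ⟨⟨fun x y h => by simp at h, fun x y a b h => by simp at h⟩,
    fun x y a b h => by simp at h⟩

lemma ocp_single (n y : ℕ) (hy : y ∈ Set.Icc 1 n) :
    OCP n (fun x => if x = y then some y else none) := by
  refine ⟨⟨?_, ?_⟩, ?_⟩
  · intro x z h
    simp only at h
    split at h <;> simp_all
  · intro x z a b hx hz
    simp only at hx hz
    split at hx <;> split at hz <;> simp_all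
  · intro x z a b hx hz hxz
    simp only at hx hz
    split at hx <;> split at hz <;> simp_all

lemma pcomp_eq_iff (α γ δ : ℕ → Option ℕ) :
    pcomp α γ = pcomp α δ ↔ ∀ y ∈ img α, γ y = δ y := by
  constructor
  · rintro h y ⟨x, hx⟩
    have := congrFun h x
    simpa [pcomp, hx] using this
  · intro h
    funext x
    simp only [pcomp]
    cases hx : α x with
    | none => rfl
    | some y => exact h y ⟨x, hx⟩

lemma img_subset_of_lstar (n : ℕ) {α β : ℕ → Option ℕ} (hα : IsPT n α)
    (h : LStar (OCP n) α β) : img α ⊆ img β := by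
  rintro y ⟨x, hx⟩
  obtain ⟨_, hy⟩ := hα x y hx
  have hγ := ocp_single n y hy
  have hδ := ocp_empty n
  have hne : pcomp α (fun z => if z = y then some y else none)
      ≠ pcomp α (fun _ => none) := by
    intro heq
    have := congrFun heq x
    simp [pcomp, hx] at this
  have hne2 : pcomp β (fun z => if z = y then some y else none)
      ≠ pcomp β (fun _ => none) :=
    fun heq => hne ((h _ _ hγ hδ).mpr heq)
  rw [Ne, pcomp_eq_iff] at hne2
  push_neg at hne2
  obtain ⟨z, hz, hzne⟩ := hne2
  by_cases hzy : z = y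
  · subst hzy; exact hz
  · simp [hzy] at hzne

/-- Theorem 2.1(i) for `OCP n`: `α L* β` iff `im α = im β`. -/
theorem lstar_iff_img_eq_OCP (n : ℕ) (hn : 0 < n) (α β : ℕ → Option ℕ)
    (hα : OCP n α) (hβ : OCP n β) :
    LStar (OCP n) α β ↔ img α = img β := by
  constructor
  · intro h
    exact Set.Subset.antisymm
      (img_subset_of_lstar n hα.1.1 h)
      (img_subset_of_lstar n hβ.1.1 (fun γ δ hγ hδ => (h γ δ hγ hδ).symm))
  · intro h γ δ _ _
    rw [pcomp_eq_iff, pcomp_eq_iff, h]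
end

section
/- Let n be a positive integer and let α, β be elements of ORCP_n. Then α R* β if and only if ker α = ker β (equality of relations; in particular dom α = dom β and, for all x, y ∈ dom α, xα = yα if and only if xβ = yβ). -/
/-- Constant map on `[1,n]` with value `x`. -/
def cmap (n x : ℕ) : ℕ → Option ℕ := fun z => if 1 ≤ z ∧ z ≤ n then some x else none

lemma cmap_eq {n x z y : ℕ} (h : cmap n x z = some y) : y = x ∧ 1 ≤ z ∧ z ≤ n := by
  unfold cmap at h
  split at h
  · exact ⟨(Option.some.inj h).symm, ‹_›⟩
  · simp at h

lemma cmap_ORCP (n x : ℕ) (h1 : 1 ≤ x) (h2 : x ≤ n) : ORCP n (cmap n x) := by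
  refine ⟨⟨?_, ?_⟩, Or.inl ?_⟩
  · intro z y hz
    obtain ⟨rfl, hz1, hz2⟩ := cmap_eq hz
    exact ⟨⟨hz1, hz2⟩, ⟨h1, h2⟩⟩
  · intro z w a b hz hw
    obtain ⟨rfl, -⟩ := cmap_eq hz
    obtain ⟨rfl, -⟩ := cmap_eq hw
    simp [Nat.dist_self]
  · intro z w a b hz hw _
    obtain ⟨rfl, -⟩ := cmap_eq hz
    obtain ⟨rfl, -⟩ := cmap_eq hw
    exact le_refl _

lemma emap_ORCP (n : ℕ) : ORCP n (fun _ => (none : Option ℕ)) :=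
  ⟨⟨fun _ _ h => by simp at h, fun _ _ _ _ h => by simp at h⟩,
    Or.inl (fun _ _ _ _ h => by simp at h)⟩

/-- One inclusion of the forward direction. -/
lemma rstar_pker_subset {n : ℕ} (hn : 0 < n) {α β : ℕ → Option ℕ}
    (hα : ORCP n α) (h : RStar (ORCP n) α β) : pker α ⊆ pker β := by
  have h1n : 1 ≤ n := hn
  rintro ⟨x, y⟩ ⟨hx, hxy⟩
  obtain ⟨a, ha⟩ := Option.ne_none_iff_exists'.mp hx
  obtain ⟨⟨hx1, hx2⟩, -⟩ := hα.1.1 x a ha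
  have hy : α y = some a := hxy ▸ ha
  obtain ⟨⟨hy1, hy2⟩, -⟩ := hα.1.1 y a hy
  -- domain: β x ≠ none
  have hdom : β x ≠ none := by
    intro hbx
    have hiff := h (cmap n x) (fun _ => none) (cmap_ORCP n x hx1 hx2) (emap_ORCP n)
    have hne : pcomp (cmap n x) α ≠ pcomp (fun _ => none) α := by
      intro he
      have := congrFun he 1
      simp [pcomp, cmap, h1n, ha] at this
    apply (not_iff_not.mpr hiff).mp hne
    funext z
    simp only [pcomp, cmap]
    split <;> simp [hbx]
  refine ⟨hdom, ?_⟩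
  -- kernel: β x = β y
  have hiff := h (cmap n x) (cmap n y) (cmap_ORCP n x hx1 hx2) (cmap_ORCP n y hy1 hy2)
  have heq : pcomp (cmap n x) α = pcomp (cmap n y) α := by
    funext z
    simp only [pcomp, cmap]
    split <;> simp [ha, hy]
  have := congrFun (hiff.mp heq) 1
  simpa [pcomp, cmap, h1n] using this

/-- Backward direction, one implication, for arbitrary `γ δ`. -/
lemma pker_eq_pcomp {α β γ δ : ℕ → Option ℕ} (hk : pker α = pker β)
    (h : pcomp γ α = pcomp δ α) : pcomp γ β = pcomp δ β := by
  have hdom : ∀ d, α d = none → β d = none := by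
    intro d hd
    by_contra hbd
    have : (d, d) ∈ pker β := ⟨hbd, rfl⟩
    rw [← hk] at this
    exact this.1 hd
  funext x
  have hx := congrFun h x
  simp only [pcomp] at hx ⊢
  match hγ : γ x, hδ : δ x with
  | none, none => rfl
  | none, some d =>
    rw [hγ, hδ] at hx
    exact (hdom d hx.symm).symm
  | some c, none =>
    rw [hγ, hδ] at hx
    exact hdom c hx
  | some c, some d =>
    rw [hγ, hδ] at hx
    have hx' : α c = α d := hx
    show β c = β d
    cases hc : α c with
    | none => rw [hdom c hc, hdom d (hx'.symm.trans hc)]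
    | some a =>
      have hm : (c, d) ∈ pker α := ⟨by simp [hc], hx'⟩
      rw [hk] at hm
      exact hm.2

/-- Theorem 2.1(ii) for `ORCP n`: `α R* β` iff `ker α = ker β`. -/
theorem rstar_iff_ker_eq_ORCP (n : ℕ) (hn : 0 < n) (α β : ℕ → Option ℕ)
    (hα : ORCP n α) (hβ : ORCP n β) :
    RStar (ORCP n) α β ↔ pker α = pker β := by
  constructor
  · intro h
    exact Set.Subset.antisymm (rstar_pker_subset hn hα h)
      (rstar_pker_subset hn hβ (fun γ δ hγ hδ => (h γ δ hγ hδ).symm))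
  · intro hk γ δ _ _
    exact ⟨pker_eq_pcomp hk, pker_eq_pcomp hk.symm⟩
end

section
/- For every integer n ≥ 4, the semigroup OCP_n is not right abundant: there exists α ∈ OCP_n such that no idempotent ε ∈ OCP_n (i.e., εε = ε) satisfies α R* ε. -/
/-!
Take `α = (1 ↦ 1, 2 ↦ 2, 3 ↦ 2, 4 ↦ 3)`. Testing `R*` against the one-point maps `1 ↦ x` and the
empty map shows that every `ε` with `α R* ε` has the same domain and kernel as `α` on `[n]`. An
idempotent fixes its image pointwise, so it fixes every point whose kernel class is a singleton:
`ε 1 = 1` and `ε 4 = 4`. Since `2` and `3` are identified by `α`, a common value `b = ε 2 = ε 3`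
would have to be within distance one of both `1` and `4`, which is impossible for a contraction.
-/

def pointMap (x : ℕ) : ℕ → Option ℕ := fun t => if t = 1 then some x else none

lemma OCP_pointMap {n x : ℕ} (hx : x ∈ Set.Icc 1 n) : OCP n (pointMap x) := by
  have hval : ∀ {u v}, pointMap x u = some v → u = 1 ∧ v = x := fun {u v} h => by
    by_cases hu : u = 1 <;> simp_all [pointMap]
  refine ⟨⟨fun u v h => ?_, fun u v a b hu hv => ?_⟩, fun u v a b hu hv _ => ?_⟩
  · have := hval h
    simp only [Set.mem_Icc] at hx ⊢
    omega
  · obtain ⟨rfl, rfl⟩ := hval hu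
    obtain ⟨rfl, rfl⟩ := hval hv
    simp
  · obtain ⟨-, rfl⟩ := hval hu
    obtain ⟨-, rfl⟩ := hval hv
    rfl

lemma OCP_none (n : ℕ) : OCP n fun _ => none := by
  refine ⟨⟨?_, ?_⟩, ?_⟩ <;> simp [IsPT, IsContraction, IsOrderPreserving]

lemma pcomp_pointMap_eq_iff (β : ℕ → Option ℕ) (x y : ℕ) :
    pcomp (pointMap x) β = pcomp (pointMap y) β ↔ β x = β y := by
  refine ⟨fun h => by simpa [pcomp, pointMap] using congrFun h 1, fun h => ?_⟩
  funext t
  by_cases ht : t = 1 <;> simp [pcomp, pointMap, ht, h]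

lemma pcomp_pointMap_eq_none_iff (β : ℕ → Option ℕ) (x : ℕ) :
    pcomp (pointMap x) β = pcomp (fun _ => none) β ↔ β x = none := by
  refine ⟨fun h => by simpa [pcomp, pointMap] using congrFun h 1, fun h => ?_⟩
  funext t
  by_cases ht : t = 1 <;> simp [pcomp, pointMap, ht, h]

lemma apply_apply_of_pcomp_self {ε : ℕ → Option ℕ} (hε : pcomp ε ε = ε) {x a : ℕ}
    (h : ε x = some a) : ε a = some a := by
  simpa [pcomp, h] using congrFun hε x

namespace RStar

variable {n : ℕ} {α ε : ℕ → Option ℕ}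

lemma apply_eq_iff (h : RStar (OCP n) α ε) {x y : ℕ} (hx : x ∈ Set.Icc 1 n)
    (hy : y ∈ Set.Icc 1 n) : α x = α y ↔ ε x = ε y := by
  simpa only [pcomp_pointMap_eq_iff] using h _ _ (OCP_pointMap hx) (OCP_pointMap hy)

lemma apply_eq_none_iff (h : RStar (OCP n) α ε) {x : ℕ} (hx : x ∈ Set.Icc 1 n) :
    α x = none ↔ ε x = none := by
  simpa only [pcomp_pointMap_eq_none_iff] using h _ _ (OCP_pointMap hx) (OCP_none n)

lemma apply_eq_self_of_pcomp_self (h : RStar (OCP n) α ε) (hε : IsPT n ε)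
    (hidem : pcomp ε ε = ε) {x : ℕ} (hx : x ∈ Set.Icc 1 n) (hxα : α x ≠ none)
    (hclass : ∀ y, α y = α x → y = x) : ε x = some x := by
  obtain ⟨a, ha⟩ := Option.ne_none_iff_exists'.mp fun hεx => hxα ((h.apply_eq_none_iff hx).2 hεx)
  have hεa := apply_apply_of_pcomp_self hidem ha
  have hax : α a = α x := ((h.apply_eq_iff (hε a a hεa).1 hx).2 (hεa.trans ha.symm))
  rwa [← hclass a hax]

end RStar

def nonAbundantWitness : ℕ → Option ℕ
  | 1 => some 1
  | 2 => some 2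
  | 3 => some 2
  | 4 => some 3
  | _ => none

lemma nonAbundantWitness_eq_some {x a : ℕ} (h : nonAbundantWitness x = some a) :
    x = 1 ∧ a = 1 ∨ x = 2 ∧ a = 2 ∨ x = 3 ∧ a = 2 ∨ x = 4 ∧ a = 3 := by
  match x, h with
  | 1, h | 2, h | 3, h | 4, h => cases h; omega

lemma OCP_nonAbundantWitness {n : ℕ} (hn : 4 ≤ n) : OCP n nonAbundantWitness := by
  refine ⟨⟨?_, ?_⟩, ?_⟩
  · intro x a h
    have := nonAbundantWitness_eq_some h
    simp only [Set.mem_Icc]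
    omega
  · intro x y a b hx hy
    have := nonAbundantWitness_eq_some hx
    have := nonAbundantWitness_eq_some hy
    simp only [Nat.dist]
    omega
  · intro x y a b hx hy
    have := nonAbundantWitness_eq_some hx
    have := nonAbundantWitness_eq_some hy
    omega

/-- For `n ≥ 4`, `OCP n` is not right abundant: some `R*`-class has no idempotent. -/
theorem OCP_not_right_abundant (n : ℕ) (hn : 4 ≤ n) :
    ∃ α : ℕ → Option ℕ, OCP n α ∧
      ∀ ε : ℕ → Option ℕ, OCP n ε → pcomp ε ε = ε → ¬ RStar (OCP n) α ε := by
  refine ⟨nonAbundantWitness, OCP_nonAbundantWitness hn, fun ε hε hidem hR => ?_⟩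
  have mem : ∀ x ∈ Set.Icc 1 4, x ∈ Set.Icc 1 n := fun x hx => Set.Icc_subset_Icc_right hn hx
  have hε1 : ε 1 = some 1 :=
    hR.apply_eq_self_of_pcomp_self hε.1.1 hidem (mem 1 (by norm_num)) (by simp [nonAbundantWitness])
      fun y hy => by have := nonAbundantWitness_eq_some hy; omega
  have hε4 : ε 4 = some 4 :=
    hR.apply_eq_self_of_pcomp_self hε.1.1 hidem (mem 4 (by norm_num)) (by simp [nonAbundantWitness])
      fun y hy => by have := nonAbundantWitness_eq_some hy; omega
  obtain ⟨b, hε2⟩ := Option.ne_none_iff_exists'.mp fun h =>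
    absurd ((hR.apply_eq_none_iff (mem 2 (by norm_num))).2 h) (by simp [nonAbundantWitness])
  have hε3 : ε 3 = some b :=
    ((hR.apply_eq_iff (mem 3 (by norm_num)) (mem 2 (by norm_num))).1 rfl).trans hε2
  have h12 := hε.1.2 1 2 1 b hε1 hε2
  have h34 := hε.1.2 3 4 b 4 hε3 hε4
  simp only [Nat.dist] at h12 h34
  omega
end

section
/- For every positive integer n, the set SReg(ORCP_n) of strongly regular elements of ORCP_n is a regular subsemigroup of ORCP_n: it is closed under composition (if α and β are strongly regular then so is αβ), and every α ∈ SReg(ORCP_n) admits β ∈ SReg(ORCP_n) with αβα = α. -/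
/-- `α` is a regular element of the class `S`: there is `β ∈ S` with `αβα = α`. -/
def RegularIn (S : (ℕ → Option ℕ) → Prop) (α : ℕ → Option ℕ) : Prop :=
  ∃ β, S β ∧ pcomp (pcomp α β) α = α

/-- `T` is a transversal of the kernel partition `Ker α`: a subset of `dom α`
containing exactly one element of each kernel class. -/
def IsTransversal (α : ℕ → Option ℕ) (T : Set ℕ) : Prop :=
  (∀ t ∈ T, α t ≠ none) ∧ ∀ v ∈ img α, ∃! t, t ∈ T ∧ α t = some v

/-- `T` is a convex subset of `[n]`. -/
def ConvexIn (n : ℕ) (T : Set ℕ) : Prop :=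
  ∀ x ∈ T, ∀ y ∈ T, ∀ z ∈ Set.Icc 1 n, x ≤ z → z ≤ y → z ∈ T

/-- A strongly regular element of `ORCP n`: a regular element whose kernel
partition admits a convex transversal. -/
def StronglyRegular (n : ℕ) (α : ℕ → Option ℕ) : Prop :=
  ORCP n α ∧ RegularIn (ORCP n) α ∧ ∃ T : Set ℕ, IsTransversal α T ∧ ConvexIn n T


/-! On a convex transversal `T` an element `α` of `ORCP n` is an isometry: consecutive points of
`T` have distinct images at distance at most one, and monotonicity keeps all steps in the same
direction. So `im α` is convex, and the inverse of `α` restricted to `T` lies in `ORCP n`,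
satisfies `α α' α = α` and has `im α` as a convex transversal. Hence an element of `ORCP n` with
a convex transversal is already strongly regular, which gives the second half and reduces the
first to finding a convex transversal of `αβ`. The kernel classes of `β` are intervals in
increasing or decreasing order; if `β` takes two values on the interval `im α`, then each point
of `T` whose class meets `im α` lies in `im α`, so `T ∩ im α` is a convex transversal of `β`
restricted to `im α`, and otherwise a single point will do. Pulling that back along the
transversal of `α` gives a convex transversal of `αβ`. -/

section Basic

variable {n : ℕ} {α β : ℕ → Option ℕ} {S T : Set ℕ}

lemma img_subset_Icc (hα : IsPT n α) : img α ⊆ Set.Icc 1 n := by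
  rintro v ⟨x, hx⟩
  exact (hα x v hx).2

lemma pcomp_eq_some {x c : ℕ} : pcomp α β x = some c ↔ ∃ b, α x = some b ∧ β b = some c :=
  Option.bind_eq_some_iff

lemma ConvexIn.inter {I : Set ℕ} (hS : ConvexIn n S) (hI : ConvexIn n I) : ConvexIn n (S ∩ I) :=
  fun x hx y hy z hz hxz hzy => ⟨hS x hx.1 y hy.1 z hz hxz hzy, hI x hx.2 y hy.2 z hz hxz hzy⟩

lemma ConvexIn.mem_of_le_of_le (hTc : ConvexIn n T) (hTn : T ⊆ Set.Icc 1 n) {x y z : ℕ}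
    (hx : x ∈ T) (hy : y ∈ T) (hxz : x ≤ z) (hzy : z ≤ y) : z ∈ T :=
  hTc x hx y hy z ⟨(hTn hx).1.trans hxz, hzy.trans (hTn hy).2⟩ hxz hzy

lemma ConvexIn.mem_of_dist_add_dist (hTc : ConvexIn n T) (hTn : T ⊆ Set.Icc 1 n) {x y z : ℕ}
    (hx : x ∈ T) (hy : y ∈ T) (h : Nat.dist x z + Nat.dist z y = Nat.dist x y) : z ∈ T := by
  unfold Nat.dist at h
  rcases le_total x y with hxy | hyx
  · exact hTc.mem_of_le_of_le hTn hx hy (by omega) (by omega)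
  · exact hTc.mem_of_le_of_le hTn hy hx (by omega) (by omega)

lemma IsTransversal.exists_apply_eq_some (hT : IsTransversal α T) {t : ℕ} (ht : t ∈ T) :
    ∃ v, α t = some v :=
  Option.ne_none_iff_exists'.1 (hT.1 t ht)

lemma IsTransversal.subset_Icc (hα : IsPT n α) (hT : IsTransversal α T) : T ⊆ Set.Icc 1 n := by
  intro t ht
  obtain ⟨v, hv⟩ := hT.exists_apply_eq_some ht
  exact (hα t v hv).1

lemma IsTransversal.eq_of_apply_eq (hT : IsTransversal α T) {t t' v : ℕ}
    (ht : t ∈ T) (ht' : t' ∈ T) (hv : α t = some v) (hv' : α t' = some v) : t = t' :=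
  (hT.2 v ⟨t, hv⟩).unique ⟨ht, hv⟩ ⟨ht', hv'⟩

lemma IsTransversal.exists_mem_apply_eq (hT : IsTransversal α T) {x v : ℕ}
    (hx : α x = some v) : ∃ t ∈ T, α t = some v :=
  let ⟨t, ht, _⟩ := hT.2 v ⟨x, hx⟩
  ⟨t, ht⟩

lemma dist_add_dist_of_le (hα : IsOrderPreserving α ∨ IsOrderReversing α) {x y z a b c : ℕ}
    (hxy : x ≤ y) (hyz : y ≤ z) (ha : α x = some a) (hb : α y = some b) (hc : α z = some c) :
    Nat.dist a b + Nat.dist b c = Nat.dist a c := by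
  unfold Nat.dist
  rcases hα with h | h <;>
    (have := h x y a b ha hb hxy; have := h y z b c hb hc hyz; omega)

lemma lt_of_apply_ne (hα : IsOrderPreserving α ∨ IsOrderReversing α) {x y x' y' a b : ℕ}
    (hx : α x = some a) (hy : α y = some b) (hab : a ≠ b) (hxy : x ≤ y)
    (hx' : α x' = some a) (hy' : α y' = some b) : x' < y' := by
  by_contra! h
  rcases hα with hp | hr
  · exact hab (le_antisymm (hp x y a b hx hy hxy) (hp y' x' b a hy' hx' h))
  · exact hab (le_antisymm (hr y' x' b a hy' hx' h) (hr x y a b hx hy hxy))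

lemma ORCP.pcomp (hα : ORCP n α) (hβ : ORCP n β) : ORCP n (pcomp α β) := by
  refine ⟨⟨fun x c h => ?_, fun x y c d hc hd => ?_⟩, ?_⟩
  · obtain ⟨b, hb, hbc⟩ := pcomp_eq_some.1 h
    exact ⟨(hα.1.1 x b hb).1, (hβ.1.1 b c hbc).2⟩
  · obtain ⟨a, ha, hac⟩ := pcomp_eq_some.1 hc
    obtain ⟨b, hb, hbd⟩ := pcomp_eq_some.1 hd
    exact (hβ.1.2 a b c d hac hbd).trans (hα.1.2 x y a b ha hb)
  · rcases hα.2 with hp | hr <;> rcases hβ.2 with hq | hs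
    · refine Or.inl fun x y c d hc hd hxy => ?_
      obtain ⟨a, ha, hac⟩ := pcomp_eq_some.1 hc
      obtain ⟨b, hb, hbd⟩ := pcomp_eq_some.1 hd
      exact hq a b c d hac hbd (hp x y a b ha hb hxy)
    · refine Or.inr fun x y c d hc hd hxy => ?_
      obtain ⟨a, ha, hac⟩ := pcomp_eq_some.1 hc
      obtain ⟨b, hb, hbd⟩ := pcomp_eq_some.1 hd
      exact hs a b c d hac hbd (hp x y a b ha hb hxy)
    · refine Or.inr fun x y c d hc hd hxy => ?_
      obtain ⟨a, ha, hac⟩ := pcomp_eq_some.1 hc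
      obtain ⟨b, hb, hbd⟩ := pcomp_eq_some.1 hd
      exact hq b a d c hbd hac (hr x y a b ha hb hxy)
    · refine Or.inl fun x y c d hc hd hxy => ?_
      obtain ⟨a, ha, hac⟩ := pcomp_eq_some.1 hc
      obtain ⟨b, hb, hbd⟩ := pcomp_eq_some.1 hd
      exact hs b a d c hbd hac (hr x y a b ha hb hxy)

end Basic

section ConvexTransversal

variable {n : ℕ} {α : ℕ → Option ℕ} {T : Set ℕ}

lemma IsContraction.dist_apply_succ (hα : IsContraction α) (hT : IsTransversal α T) {t a b : ℕ}
    (ht : t ∈ T) (ht' : t + 1 ∈ T) (ha : α t = some a) (hb : α (t + 1) = some b) :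
    Nat.dist a b = 1 := by
  have hab : a ≠ b := by
    rintro rfl
    have := hT.eq_of_apply_eq ht ht' ha hb
    omega
  have := hα t (t + 1) a b ha hb
  unfold Nat.dist at this ⊢
  omega

lemma ORCP.dist_eq_of_mem_transversal (hα : ORCP n α) (hT : IsTransversal α T)
    (hTc : ConvexIn n T) {t t' a b : ℕ} (ht : t ∈ T) (ht' : t' ∈ T)
    (ha : α t = some a) (hb : α t' = some b) : Nat.dist a b = Nat.dist t t' := by
  wlog hle : t ≤ t' generalizing t t' a b
  · rw [Nat.dist_comm, Nat.dist_comm t]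
    exact this ht' ht hb ha (by omega)
  induction t', hle using Nat.le_induction generalizing b with
  | base =>
    rw [ha, Option.some.injEq] at hb
    simp [hb]
  | succ s hts ih =>
    have hs : s ∈ T := hTc.mem_of_le_of_le (hT.subset_Icc hα.1.1) ht ht' hts (by omega)
    obtain ⟨c, hc⟩ := hT.exists_apply_eq_some hs
    rw [← dist_add_dist_of_le hα.2 hts (by omega) ha hc hb, ih hs hc,
      hα.1.2.dist_apply_succ hT hs ht' hc hb]
    unfold Nat.dist
    omega

lemma ORCP.convexIn_img (hα : ORCP n α) (hT : IsTransversal α T) (hTc : ConvexIn n T) :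
    ConvexIn n (img α) := by
  rintro v ⟨x, hx⟩ v' ⟨x', hx'⟩ z - hvz hzv'
  have hTn := hT.subset_Icc hα.1.1
  obtain ⟨t, ht, htv⟩ := hT.exists_mem_apply_eq hx
  obtain ⟨t', ht', htv'⟩ := hT.exists_mem_apply_eq hx'
  have hdist := hα.dist_eq_of_mem_transversal hT hTc ht ht' htv htv'
  -- the point of `T` that is as far from `t` as `z` is from `v` is mapped to `z`
  obtain ⟨s, hts, hst'⟩ : ∃ s, Nat.dist t s = z - v ∧ Nat.dist s t' = Nat.dist t t' - (z - v) := by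
    unfold Nat.dist at hdist ⊢
    rcases le_total t t' with h | h
    · exact ⟨t + (z - v), by omega, by omega⟩
    · exact ⟨t - (z - v), by omega, by omega⟩
  have hs : s ∈ T := hTc.mem_of_dist_add_dist hTn ht ht' (by unfold Nat.dist at *; omega)
  obtain ⟨w, hw⟩ := hT.exists_apply_eq_some hs
  have hvw := hα.dist_eq_of_mem_transversal hT hTc ht hs htv hw
  have hwv' := hα.dist_eq_of_mem_transversal hT hTc hs ht' hw htv'
  refine ⟨s, hw.trans (congrArg some ?_)⟩
  unfold Nat.dist at *
  omega

open scoped Classical in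
noncomputable def invOn (α : ℕ → Option ℕ) (T : Set ℕ) : ℕ → Option ℕ :=
  fun v => if h : ∃ u ∈ T, α u = some v then some h.choose else none

lemma invOn_eq_some (hT : IsTransversal α T) {u v : ℕ} :
    invOn α T v = some u ↔ u ∈ T ∧ α u = some v := by
  unfold invOn
  split_ifs with h
  · rw [Option.some.injEq]
    exact ⟨fun hu => hu ▸ h.choose_spec,
      fun hu => hT.eq_of_apply_eq h.choose_spec.1 hu.1 h.choose_spec.2 hu.2⟩
  · exact ⟨nofun, fun hu => h ⟨u, hu⟩⟩

lemma pcomp_pcomp_invOn (hT : IsTransversal α T) : pcomp (pcomp α (invOn α T)) α = α := by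
  funext x
  cases hx : α x with
  | none => simp [pcomp, hx]
  | some v =>
    obtain ⟨u, hu, huv⟩ := hT.exists_mem_apply_eq hx
    simp [pcomp, hx, (invOn_eq_some hT).2 ⟨hu, huv⟩, huv]

lemma isTransversal_img_invOn (hT : IsTransversal α T) : IsTransversal (invOn α T) (img α) := by
  refine ⟨?_, ?_⟩
  · rintro v ⟨x, hx⟩
    obtain ⟨u, hu, huv⟩ := hT.exists_mem_apply_eq hx
    simp [(invOn_eq_some hT).2 ⟨hu, huv⟩]
  · rintro u ⟨v, hv⟩
    obtain ⟨-, huv⟩ := (invOn_eq_some hT).1 hv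
    refine ⟨v, ⟨⟨u, huv⟩, hv⟩, fun v' ⟨_, hv'⟩ => ?_⟩
    obtain ⟨-, huv'⟩ := (invOn_eq_some hT).1 hv'
    exact Option.some.inj (huv'.symm.trans huv)

lemma ORCP.invOn (hα : ORCP n α) (hT : IsTransversal α T) (hTc : ConvexIn n T) :
    ORCP n (invOn α T) := by
  have hinv {u v : ℕ} := invOn_eq_some (u := u) (v := v) hT
  refine ⟨⟨fun v u h => ?_, fun v v' u u' h h' => ?_⟩, ?_⟩
  · obtain ⟨-, huv⟩ := hinv.1 h
    exact (hα.1.1 u v huv).symm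
  · obtain ⟨hu, huv⟩ := hinv.1 h
    obtain ⟨hu', huv'⟩ := hinv.1 h'
    exact (hα.dist_eq_of_mem_transversal hT hTc hu hu' huv huv').ge
  · rcases hα.2 with hp | hr
    · refine Or.inl fun v v' u u' h h' hvv' => ?_
      obtain ⟨hu, huv⟩ := hinv.1 h
      obtain ⟨hu', huv'⟩ := hinv.1 h'
      by_contra! hlt
      have hv'v := hp u' u v' v huv' huv hlt.le
      obtain rfl : v = v' := le_antisymm hvv' hv'v
      exact hlt.ne' (hT.eq_of_apply_eq hu hu' huv huv')
    · refine Or.inr fun v v' u u' h h' hvv' => ?_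
      obtain ⟨hu, huv⟩ := hinv.1 h
      obtain ⟨hu', huv'⟩ := hinv.1 h'
      by_contra! hlt
      have hv'v := hr u u' v v' huv huv' hlt.le
      obtain rfl : v = v' := le_antisymm hvv' hv'v
      exact hlt.ne (hT.eq_of_apply_eq hu hu' huv huv')

lemma StronglyRegular.of_convex_transversal (hα : ORCP n α) (hT : IsTransversal α T)
    (hTc : ConvexIn n T) : StronglyRegular n α :=
  ⟨hα, ⟨invOn α T, hα.invOn hT hTc, pcomp_pcomp_invOn hT⟩, T, hT, hTc⟩

lemma stronglyRegular_invOn (hα : ORCP n α) (hT : IsTransversal α T)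
    (hTc : ConvexIn n T) : StronglyRegular n (invOn α T) :=
  .of_convex_transversal (hα.invOn hT hTc) (isTransversal_img_invOn hT)
    (hα.convexIn_img hT hTc)

end ConvexTransversal

section Composition

variable {n : ℕ} {α β : ℕ → Option ℕ} {S T I : Set ℕ}

open scoped Classical in
noncomputable def prestrict (β : ℕ → Option ℕ) (I : Set ℕ) : ℕ → Option ℕ :=
  fun x => if x ∈ I then β x else none

lemma prestrict_eq_some {x w : ℕ} : prestrict β I x = some w ↔ x ∈ I ∧ β x = some w := by
  unfold prestrict
  split_ifs with h <;> simp [h]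

lemma pcomp_prestrict_img : pcomp α (prestrict β (img α)) = pcomp α β := by
  funext x
  cases hx : α x with
  | none => simp [pcomp, hx]
  | some v => simp [pcomp, hx, prestrict, show v ∈ img α from ⟨x, hx⟩]

lemma IsTransversal.subset_of_prestrict (hT : IsTransversal (prestrict β I) T) : T ⊆ I := by
  intro t ht
  obtain ⟨w, hw⟩ := hT.exists_apply_eq_some ht
  exact (prestrict_eq_some.1 hw).1

lemma exists_convex_transversal_of_subsingleton (h : (img α).Subsingleton) :
    ∃ T, IsTransversal α T ∧ ConvexIn n T := by
  rcases (img α).eq_empty_or_nonempty with h₀ | ⟨w, z, hz⟩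
  · refine ⟨∅, ⟨nofun, fun v hv => ?_⟩, nofun⟩
    simp [h₀] at hv
  · refine ⟨{z}, ⟨?_, fun v hv => ⟨z, ⟨rfl, ?_⟩, fun t ht => ht.1⟩⟩, ?_⟩
    · rintro t rfl
      simp [hz]
    · rw [hz, h ⟨z, hz⟩ hv]
    · rintro x rfl y rfl t - hxt hty
      exact le_antisymm hty hxt

/-- The neighbour of `t` in `T` towards the representative of `b` takes a value other than `a`;
as kernel classes are ordered intervals, `z` and `z'` then lie on opposite sides of `t`. -/
lemma mem_of_mem_transversal (hβ : IsPT n β) (hmono : IsOrderPreserving β ∨ IsOrderReversing β)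
    (hT : IsTransversal β T) (hTc : ConvexIn n T)
    (hI : ConvexIn n I) {t z z' a b : ℕ} (ht : t ∈ T) (hta : β t = some a) (hz : z ∈ I)
    (hza : β z = some a) (hz' : z' ∈ I) (hz'b : β z' = some b) (hab : a ≠ b) : t ∈ I := by
  have hTn := hT.subset_Icc hβ
  obtain ⟨t', ht', ht'b⟩ := hT.exists_mem_apply_eq hz'b
  have htt' : t ≠ t' := by
    rintro rfl
    exact hab (Option.some.inj (hta.symm.trans ht'b))
  rcases htt'.lt_or_gt with hlt | hgt
  · have hs : t + 1 ∈ T := hTc.mem_of_le_of_le hTn ht ht' (by omega) hlt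
    obtain ⟨c, hc⟩ := hT.exists_apply_eq_some hs
    have hac : a ≠ c := by
      rintro rfl
      have := hT.eq_of_apply_eq ht hs hta hc
      omega
    have hzt : z < t + 1 := lt_of_apply_ne hmono hta hc hac (by omega) hza hc
    have htz' : t < z' := lt_of_apply_ne hmono hta ht'b hab hlt.le hta hz'b
    exact hI z hz z' hz' t (hTn ht) (by omega) htz'.le
  · have hs : t - 1 ∈ T := hTc.mem_of_le_of_le hTn ht' ht (by omega) (by omega)
    obtain ⟨c, hc⟩ := hT.exists_apply_eq_some hs
    have hca : c ≠ a := by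
      rintro rfl
      have := hT.eq_of_apply_eq hs ht hc hta
      omega
    have htz : t - 1 < z := lt_of_apply_ne hmono hc hta hca (by omega) hc hza
    have hz't : z' < t := lt_of_apply_ne hmono ht'b hta hab.symm hgt.le hz'b hta
    exact hI z' hz' z hz t (hTn ht) hz't.le (by omega)

lemma exists_convex_transversal_prestrict (hβ : IsPT n β)
    (hmono : IsOrderPreserving β ∨ IsOrderReversing β) (hT : IsTransversal β T)
    (hTc : ConvexIn n T) (hI : ConvexIn n I) :
    ∃ T₁, IsTransversal (prestrict β I) T₁ ∧ ConvexIn n T₁ := by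
  by_cases hsub : (img (prestrict β I)).Subsingleton
  · exact exists_convex_transversal_of_subsingleton hsub
  obtain ⟨w₁, ⟨z₁, hz₁⟩, w₂, ⟨z₂, hz₂⟩, hw⟩ := Set.not_subsingleton_iff.1 hsub
  rw [prestrict_eq_some] at hz₁ hz₂
  refine ⟨T ∩ I, ⟨fun t ht => ?_, ?_⟩, hTc.inter hI⟩
  · obtain ⟨w, hw⟩ := hT.exists_apply_eq_some ht.1
    simp [prestrict_eq_some.2 ⟨ht.2, hw⟩]
  rintro w ⟨z, hz⟩
  obtain ⟨hzI, hzw⟩ := prestrict_eq_some.1 hz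
  obtain ⟨t, ht, htw⟩ := hT.exists_mem_apply_eq hzw
  have htI : t ∈ I := by
    by_cases h : w = w₁
    · exact mem_of_mem_transversal hβ hmono hT hTc hI ht htw hzI hzw hz₂.1 hz₂.2
        (h ▸ hw)
    · exact mem_of_mem_transversal hβ hmono hT hTc hI ht htw hzI hzw hz₁.1 hz₁.2 h
  refine ⟨t, ⟨⟨ht, htI⟩, prestrict_eq_some.2 ⟨htI, htw⟩⟩, fun t' ⟨ht', ht'w⟩ => ?_⟩
  exact hT.eq_of_apply_eq ht'.1 ht (prestrict_eq_some.1 ht'w).2 htw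

lemma exists_convex_transversal_pcomp (hα : IsPT n α)
    (hmono : IsOrderPreserving α ∨ IsOrderReversing α) (hS : IsTransversal α S)
    (hSc : ConvexIn n S) {γ : ℕ → Option ℕ} (hT : IsTransversal γ T) (hTc : ConvexIn n T)
    (hTα : T ⊆ img α) : ∃ U, IsTransversal (pcomp α γ) U ∧ ConvexIn n U := by
  refine ⟨{u | u ∈ S ∧ ∃ t ∈ T, α u = some t}, ⟨?_, ?_⟩, ?_⟩
  · rintro u ⟨-, t, ht, hut⟩
    obtain ⟨w, htw⟩ := hT.exists_apply_eq_some ht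
    simp [pcomp, hut, htw]
  · rintro w ⟨x, hx⟩
    obtain ⟨v, -, hvw⟩ := pcomp_eq_some.1 hx
    obtain ⟨t, ht, htw⟩ := hT.exists_mem_apply_eq hvw
    obtain ⟨y, hy⟩ := hTα ht
    obtain ⟨u, hu, hut⟩ := hS.exists_mem_apply_eq hy
    refine ⟨u, ⟨⟨hu, t, ht, hut⟩, pcomp_eq_some.2 ⟨t, hut, htw⟩⟩, ?_⟩
    rintro u' ⟨⟨hu', t', ht', hut'⟩, hu'w⟩
    obtain ⟨t'', hut'', ht''w⟩ := pcomp_eq_some.1 hu'w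
    obtain rfl : t' = t'' := Option.some.inj (hut'.symm.trans hut'')
    obtain rfl : t' = t := hT.eq_of_apply_eq ht' ht ht''w htw
    exact hS.eq_of_apply_eq hu' hu hut' hut
  · rintro x ⟨hx, a, ha, hxa⟩ y ⟨hy, b, hb, hyb⟩ z hz hxz hzy
    have hzS := hSc x hx y hy z hz hxz hzy
    obtain ⟨c, hzc⟩ := hS.exists_apply_eq_some hzS
    have hTn := hTα.trans (img_subset_Icc hα)
    exact ⟨hzS, c, hTc.mem_of_dist_add_dist hTn ha hb
      (dist_add_dist_of_le hmono hxz hzy hxa hzc hyb), hzc⟩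

end Composition

theorem sreg_is_regular_subsemigroup_general (n : ℕ) :
    (∀ α β : ℕ → Option ℕ, StronglyRegular n α → StronglyRegular n β →
      StronglyRegular n (pcomp α β)) ∧
    (∀ α : ℕ → Option ℕ, StronglyRegular n α →
      ∃ β : ℕ → Option ℕ, StronglyRegular n β ∧ pcomp (pcomp α β) α = α) := by
  refine ⟨?_, ?_⟩
  · rintro α β ⟨hα, -, S, hS, hSc⟩ ⟨hβ, -, T, hT, hTc⟩
    obtain ⟨T₁, hT₁, hT₁c⟩ :=
      exists_convex_transversal_prestrict hβ.1.1 hβ.2 hT hTc (hα.convexIn_img hS hSc)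
    obtain ⟨U, hU, hUc⟩ :=
      exists_convex_transversal_pcomp hα.1.1 hα.2 hS hSc hT₁ hT₁c hT₁.subset_of_prestrict
    rw [pcomp_prestrict_img] at hU
    exact .of_convex_transversal (hα.pcomp hβ) hU hUc
  · rintro α ⟨hα, -, T, hT, hTc⟩
    exact ⟨invOn α T, stronglyRegular_invOn hα hT hTc, pcomp_pcomp_invOn hT⟩

/-- Theorem 3.4 of the paper: the strongly regular elements of `ORCP n` form a
regular subsemigroup. -/
theorem sreg_is_regular_subsemigroup (n : ℕ) (hn : 0 < n) :
    (∀ α β : ℕ → Option ℕ, StronglyRegular n α → StronglyRegular n β →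
      StronglyRegular n (pcomp α β)) ∧
    (∀ α : ℕ → Option ℕ, StronglyRegular n α →
      ∃ β : ℕ → Option ℕ, StronglyRegular n β ∧ pcomp (pcomp α β) α = α) :=
  sreg_is_regular_subsemigroup_general n
end
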